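/- Let 𝒩, Λ be channels into a bipartite system ℂ^d ⊗ ℂ^d, let λ ≥ 0 satisfy that λΛ − 𝒩 is a positive map, and suppose every output Λ(ρ) has fully entangled fraction at most f. Then for any M and any families of orthonormal maximally entangled states {|Φ_m⟩} (inputs) and {|Φ′_m⟩} (decoders), (1/M) Σ_m ⟨Φ′_m| 𝒩(|Φ_m⟩⟨Φ_m|) |Φ′_m⟩ ≤ λ f. In particular, if this average exceeds 1 − ε, then 1 − ε ≤ λ f. -/

import Mathlib

open scoped BigOperators Kronecker ENNReal NNReal ComplexOrder
open Matrix

noncomputable section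

/-- A density matrix: positive semidefinite with unit trace. -/
def IsDensity {ι : Type*} [Fintype ι] (ρ : Matrix ι ι ℂ) : Prop :=
  ρ.PosSemidef ∧ ρ.trace = 1

/-- A completely positive trace-preserving map, presented by a Kraus decomposition. -/
def IsCPTP {ι κ : Type*} [Fintype ι] [DecidableEq ι] [Fintype κ] [DecidableEq κ]
    (Φ : Matrix ι ι ℂ → Matrix κ κ ℂ) : Prop :=
  ∃ (r : ℕ) (K : Fin r → Matrix κ ι ℂ),
    (∀ M, Φ M = ∑ i, K i * M * (K i)ᴴ) ∧ (∑ i, (K i)ᴴ * K i = 1)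

/-- Ampliation `Φ ⊗ id` of a superoperator, acting on the first tensor factor. -/
def ampL {ι κ α : Type*} (Φ : Matrix ι ι ℂ → Matrix κ κ ℂ) :
    Matrix (ι × α) (ι × α) ℂ → Matrix (κ × α) (κ × α) ℂ :=
  fun M => Matrix.of fun p q =>
    Φ (Matrix.of fun i j => M (i, p.2) (j, q.2)) p.1 q.1

/-- Ampliation `id ⊗ Λ` of a superoperator, acting on the second tensor factor. -/
def ampR {ι κ α : Type*} (Λ : Matrix ι ι ℂ → Matrix κ κ ℂ) :
    Matrix (α × ι) (α × ι) ℂ → Matrix (α × κ) (α × κ) ℂ :=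
  fun M => Matrix.of fun p q =>
    Λ (Matrix.of fun i j => M (p.1, i) (q.1, j)) p.2 q.2

/-- Tensor product `Φ ⊗ Λ` of superoperators. -/
def tensorMap {ι κ ι' κ' : Type*} (Φ : Matrix ι ι ℂ → Matrix κ κ ℂ)
    (Λ : Matrix ι' ι' ℂ → Matrix κ' κ' ℂ) :
    Matrix (ι × ι') (ι × ι') ℂ → Matrix (κ × κ') (κ × κ') ℂ :=
  fun M => ampL Φ (ampR Λ M)

/-- Trace norm `‖M‖₁ = tr √(MᴴM)`. -/
def traceNorm {ι : Type*} [Fintype ι] [DecidableEq ι] (M : Matrix ι ι ℂ) : ℝ :=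
  (((Matrix.posSemidef_conjTranspose_mul_self M).1.eigenvectorUnitary : Matrix ι ι ℂ) *
    Matrix.diagonal (((↑) : ℝ → ℂ) ∘ Real.sqrt ∘ (Matrix.posSemidef_conjTranspose_mul_self M).1.eigenvalues) *
    (star (Matrix.posSemidef_conjTranspose_mul_self M).1.eigenvectorUnitary : Matrix ι ι ℂ)).trace.re

/-- Diamond norm: supremum over finite-dimensional ancillas and joint states of the
trace norm of the ampliated output. -/
def diamondNorm {ι κ : Type*} [Fintype ι] [DecidableEq ι] [Fintype κ] [DecidableEq κ]
    (Φ : Matrix ι ι ℂ → Matrix κ κ ℂ) : ℝ :=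
  ⨆ a : ℕ, ⨆ ρ : {ρ : Matrix (ι × Fin a) (ι × Fin a) ℂ // IsDensity ρ},
    traceNorm (ampL Φ (α := Fin a) ρ.1)

/-- A maximally entangled unit vector on `ℂ^d ⊗ ℂ^d`: `(U ⊗ I)|Ψ⁺_d⟩` for a unitary `U`. -/
def IsMaxEnt {d : ℕ} (v : Fin d × Fin d → ℂ) : Prop :=
  ∃ U : Matrix (Fin d) (Fin d) ℂ, Uᴴ * U = 1 ∧
    ∀ p q, v (p, q) = U p q / (Real.sqrt d : ℂ)

/-- Fully entangled fraction `F(ρ) = max_{|Φ⟩ max. entangled} ⟨Φ|ρ|Φ⟩`. -/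
def fef {d : ℕ} (ρ : Matrix (Fin d × Fin d) (Fin d × Fin d) ℂ) : ℝ :=
  ⨆ v : {v : Fin d × Fin d → ℂ // IsMaxEnt v},
    (dotProduct (star v.1) (ρ.mulVec v.1)).re

/-- Orthonormality of a family of vectors. -/
def OrthonormalFam {ι d : Type*} [Fintype d] [DecidableEq ι] (Φ : ι → (d → ℂ)) : Prop :=
  ∀ m n, dotProduct (star (Φ m)) (Φ n) = if m = n then 1 else 0

lemma IsMaxEnt.norm_apply_le_one {d : ℕ} {v : Fin d × Fin d → ℂ} (hv : IsMaxEnt v)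
    (i : Fin d × Fin d) : ‖v i‖ ≤ 1 := by
  obtain ⟨U, hU, hvU⟩ := hv
  have hU : U ∈ unitaryGroup (Fin d) ℂ := mem_unitaryGroup_iff'.mpr hU
  have hd : (1 : ℝ) ≤ Real.sqrt d :=
    Real.one_le_sqrt.mpr (by exact_mod_cast Nat.one_le_of_lt i.1.2)
  rw [hvU, norm_div, Complex.norm_real, Real.norm_of_nonneg (Real.sqrt_nonneg _)]
  exact div_le_one_of_le₀ ((entry_norm_bound_of_unitary hU _ _).trans hd)
    (Real.sqrt_nonneg _)

lemma re_dotProduct_mulVec_le_fef {d : ℕ} (σ : Matrix (Fin d × Fin d) (Fin d × Fin d) ℂ)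
    {v : Fin d × Fin d → ℂ} (hv : IsMaxEnt v) :
    (star v ⬝ᵥ σ *ᵥ v).re ≤ fef σ := by
  -- `fef` is a `ciSup`, which needs boundedness: maximally entangled vectors lie in the
  -- compact unit ball of the sup norm.
  have hbdd : BddAbove ((fun w => (star w ⬝ᵥ σ *ᵥ w).re) '' Metric.closedBall 0 1) :=
    (isCompact_closedBall _ _).bddAbove_image (by fun_prop)
  refine le_ciSup (f := fun w : {w // IsMaxEnt w} => (star w.1 ⬝ᵥ σ *ᵥ w.1).re)
    (hbdd.mono ?_) ⟨v, hv⟩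
  rintro _ ⟨⟨w, hw⟩, rfl⟩
  exact ⟨w, mem_closedBall_zero_iff.mpr ((pi_norm_le_iff_of_nonneg zero_le_one).mpr
    hw.norm_apply_le_one), rfl⟩

lemma isDensity_vecMulVec_star {n : Type*} [Fintype n] {v : n → ℂ} (hv : star v ⬝ᵥ v = 1) :
    IsDensity (vecMulVec v (star v)) :=
  ⟨posSemidef_vecMulVec_self_star v, by rw [trace_vecMulVec, dotProduct_comm, hv]⟩

lemma Matrix.PosSemidef.re_dotProduct_mulVec_le_smul {n : Type*} [Fintype n]
    {A B : Matrix n n ℂ} {l : ℝ} (h : (l • A - B).PosSemidef) (w : n → ℂ) :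
    (star w ⬝ᵥ B *ᵥ w).re ≤ l * (star w ⬝ᵥ A *ᵥ w).re := by
  have := Complex.re_le_re (h.dotProduct_mulVec_nonneg w)
  simpa [sub_mulVec, dotProduct_sub, smul_mulVec, dotProduct_smul] using this

theorem maxEnt_success_le_fef_bound_general {e d M : ℕ} (hM : 0 < M)
    (𝒩 Λ : Matrix (Fin e × Fin e) (Fin e × Fin e) ℂ →
      Matrix (Fin d × Fin d) (Fin d × Fin d) ℂ)
    (l : ℝ) (hl : 0 ≤ l)
    (hpos : ∀ ρ : Matrix (Fin e × Fin e) (Fin e × Fin e) ℂ, ρ.PosSemidef →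
      (l • Λ ρ - 𝒩 ρ).PosSemidef)
    (f : ℝ)
    (hfef : ∀ ρ : Matrix (Fin e × Fin e) (Fin e × Fin e) ℂ, IsDensity ρ →
      fef (Λ ρ) ≤ f)
    (Φ : Fin M → (Fin e × Fin e → ℂ))
    (hΦON : OrthonormalFam Φ)
    (Φ' : Fin M → (Fin d × Fin d → ℂ)) (hΦ'ME : ∀ m, IsMaxEnt (Φ' m)) :
    ((M : ℝ)⁻¹ * ∑ m, (dotProduct (star (Φ' m))
        ((𝒩 (Matrix.vecMulVec (Φ m) (star (Φ m)))).mulVec (Φ' m))).re ≤ l * f) ∧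
    (∀ ε : ℝ, 1 - ε ≤ (M : ℝ)⁻¹ * ∑ m, (dotProduct (star (Φ' m))
        ((𝒩 (Matrix.vecMulVec (Φ m) (star (Φ m)))).mulVec (Φ' m))).re →
      1 - ε ≤ l * f) := by
  have hsuccess (m : Fin M) :
      (star (Φ' m) ⬝ᵥ 𝒩 (vecMulVec (Φ m) (star (Φ m))) *ᵥ Φ' m).re ≤ l * f := by
    have hρ := isDensity_vecMulVec_star (by simpa using hΦON m m)
    calc _ ≤ l * (star (Φ' m) ⬝ᵥ Λ (vecMulVec (Φ m) (star (Φ m))) *ᵥ Φ' m).re :=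
          (hpos _ hρ.1).re_dotProduct_mulVec_le_smul _
      _ ≤ l * fef (Λ (vecMulVec (Φ m) (star (Φ m)))) :=
          mul_le_mul_of_nonneg_left (re_dotProduct_mulVec_le_fef _ (hΦ'ME m)) hl
      _ ≤ l * f := mul_le_mul_of_nonneg_left (hfef _ hρ) hl
  have haverage : (M : ℝ)⁻¹ * ∑ m, (star (Φ' m) ⬝ᵥ
      𝒩 (vecMulVec (Φ m) (star (Φ m))) *ᵥ Φ' m).re ≤ l * f := by
    rw [inv_mul_le_iff₀ (by exact_mod_cast hM)]
    simpa using Finset.sum_le_card_nsmul Finset.univ _ _ fun m _ => hsuccess m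
  exact ⟨haverage, fun ε hε => hε.trans haverage⟩

/-- If `λΛ − 𝒩` is a positive map and every output of `Λ` has fully
entangled fraction at most `f`, then for orthonormal maximally entangled input and
decoding families, the average success probability is at most `λf`; in particular, if it
exceeds `1 − ε` then `1 − ε ≤ λf`. -/
theorem maxEnt_success_le_fef_bound {e d M : ℕ} (hM : 0 < M)
    (𝒩 Λ : Matrix (Fin e × Fin e) (Fin e × Fin e) ℂ →
      Matrix (Fin d × Fin d) (Fin d × Fin d) ℂ)
    (h𝒩 : IsCPTP 𝒩) (hΛ : IsCPTP Λ) (l : ℝ) (hl : 0 ≤ l)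
    (hpos : ∀ ρ : Matrix (Fin e × Fin e) (Fin e × Fin e) ℂ, ρ.PosSemidef →
      (l • Λ ρ - 𝒩 ρ).PosSemidef)
    (f : ℝ)
    (hfef : ∀ ρ : Matrix (Fin e × Fin e) (Fin e × Fin e) ℂ, IsDensity ρ →
      fef (Λ ρ) ≤ f)
    (Φ : Fin M → (Fin e × Fin e → ℂ)) (hΦME : ∀ m, IsMaxEnt (Φ m))
    (hΦON : OrthonormalFam Φ)
    (Φ' : Fin M → (Fin d × Fin d → ℂ)) (hΦ'ME : ∀ m, IsMaxEnt (Φ' m))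
    (hΦ'ON : OrthonormalFam Φ') :
    ((M : ℝ)⁻¹ * ∑ m, (dotProduct (star (Φ' m))
        ((𝒩 (Matrix.vecMulVec (Φ m) (star (Φ m)))).mulVec (Φ' m))).re ≤ l * f) ∧
    (∀ ε : ℝ, 1 - ε ≤ (M : ℝ)⁻¹ * ∑ m, (dotProduct (star (Φ' m))
        ((𝒩 (Matrix.vecMulVec (Φ m) (star (Φ m)))).mulVec (Φ' m))).re →
      1 - ε ≤ l * f) :=
  maxEnt_success_le_fef_bound_general hM 𝒩 Λ l hl hpos f hfef Φ hΦON Φ' hΦ'ME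

end
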